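/- arXiv:2001.08289 — 4 statements merged into one kernel-verified Lean document; each statement's English description precedes it below -/
import Mathlib

section
/- Let α, β be real with 0 < α < β, and let σ₁ ∈ ℂ with σ₁ not in the closed real segment [-β, -α]. Then σ₁ + β ≠ 0 and t(σ₁) = ((σ₁ + α)(1 + β))/((σ₁ + β)(1 + α)) does not lie in the closed nonpositive real axis (-∞, 0]. -/
/-!
If `(z + a) / (z + b) = -r` with `r ≥ 0` real, then solving for `z` gives
`z = -(a + r b) / (1 + r)`, a real convex combination of `-a` and `-b`, so `z` lies on the cut.
Hence off the cut `(z + α) / (z + β)` lies in the slit plane, and so does `t`, which is this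
quotient times the positive real `(1 + β) / (1 + α)`.
-/

open Set
open scoped ComplexOrder

namespace Complex

lemma mul_ofReal_mem_slitPlane {z : ℂ} (hz : z ∈ slitPlane) {c : ℝ} (hc : 0 < c) :
    z * c ∈ slitPlane := by
  rw [mem_slitPlane_iff] at hz ⊢
  simp only [mul_re, mul_im, ofReal_re, ofReal_im, mul_zero, sub_zero, zero_add]
  rcases hz with hre | him
  · exact Or.inl (mul_pos hre hc)
  · exact Or.inr (mul_ne_zero him hc.ne')

variable {a b : ℝ} {z : ℂ}

lemma add_ofReal_ne_zero_of_notMem_image_Icc (hab : a ≤ b) (hz : z ∉ ofReal '' Icc (-b) (-a)) :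
    z + b ≠ 0 := by
  intro h
  exact hz ⟨-b, ⟨le_rfl, neg_le_neg hab⟩, by rw [ofReal_neg, eq_neg_of_add_eq_zero_left h]⟩

lemma mem_image_Icc_of_div_add_ofReal_nonpos (hab : a ≤ b) (hzb : z + b ≠ 0)
    (h : (z + a) / (z + b) ≤ 0) : z ∈ ofReal '' Icc (-b) (-a) := by
  obtain ⟨hre, him⟩ := nonpos_iff.mp h
  set r := -((z + a) / (z + b)).re
  have hr : 0 ≤ r := neg_nonneg.mpr hre
  have hquot : (z + a) / (z + b) = -(r : ℂ) := by
    apply Complex.ext <;> simp [r, him]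
  have hz : z = ((-(a + r * b) / (1 + r) : ℝ) : ℂ) := by
    rw [div_eq_iff hzb] at hquot
    have h1r : (1 + r : ℂ) ≠ 0 := by exact_mod_cast (by positivity : (1 + r : ℝ) ≠ 0)
    push_cast
    field_simp
    linear_combination hquot
  refine ⟨_, ⟨?_, ?_⟩, hz.symm⟩
  · rw [le_div_iff₀ (by positivity)]
    nlinarith
  · rw [div_le_iff₀ (by positivity)]
    nlinarith

lemma div_add_ofReal_mem_slitPlane (hab : a ≤ b) (hz : z ∉ ofReal '' Icc (-b) (-a)) :
    (z + a) / (z + b) ∈ slitPlane :=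
  mem_slitPlane_iff_not_le_zero.mpr fun h =>
    hz <| mem_image_Icc_of_div_add_ofReal_nonpos hab
      (add_ofReal_ne_zero_of_notMem_image_Icc hab hz) h

end Complex

/-- For reals `0 < α < β` and complex `σ₁` not on the real segment `[-β, -α]`,
one has `σ₁ + β ≠ 0` and `t(σ₁) = ((σ₁+α)(1+β))/((σ₁+β)(1+α))` is not on the
closed nonpositive real axis `(-∞, 0]`. -/
theorem t_not_nonpos_real_of_off_cut (α β : ℝ) (hα : 0 < α) (hαβ : α < β)
    (σ₁ : ℂ) (hσ : ¬(σ₁.im = 0 ∧ -β ≤ σ₁.re ∧ σ₁.re ≤ -α)) :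
    σ₁ + (β : ℂ) ≠ 0 ∧
    ¬((((σ₁ + (α : ℂ)) * (1 + (β : ℂ))) / ((σ₁ + (β : ℂ)) * (1 + (α : ℂ)))).im = 0 ∧
      (((σ₁ + (α : ℂ)) * (1 + (β : ℂ))) / ((σ₁ + (β : ℂ)) * (1 + (α : ℂ)))).re ≤ 0) := by
  have hcut : σ₁ ∉ Complex.ofReal '' Icc (-β) (-α) := by
    rintro ⟨x, hx, rfl⟩
    exact hσ ⟨Complex.ofReal_im x, hx⟩
  have hβ := Complex.add_ofReal_ne_zero_of_notMem_image_Icc hαβ.le hcut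
  refine ⟨hβ, ?_⟩
  have h1α : (1 + α : ℂ) ≠ 0 := by exact_mod_cast (by positivity : (1 + α : ℝ) ≠ 0)
  have ht : (σ₁ + α) * (1 + β) / ((σ₁ + β) * (1 + α))
      = (σ₁ + α) / (σ₁ + β) * (((1 + β) / (1 + α) : ℝ) : ℂ) := by
    push_cast
    field_simp
  rw [ht, and_comm, ← Complex.nonpos_iff, ← Complex.mem_slitPlane_iff_not_le_zero]
  exact Complex.mul_ofReal_mem_slitPlane (Complex.div_add_ofReal_mem_slitPlane hαβ.le hcut)
    (div_pos (by linarith) (by linarith))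
end

section
/- Let α, β be real with 0 < α < β, and let σ₁ ∈ ℂ with σ₁ not in the closed real segment [-β, -α]. Set t = ((σ₁ + α)(1 + β))/((σ₁ + β)(1 + α)) and z = (√t - 1)/(√t + 1), where √t is the principal square root. Then |z| < 1, and z = 0 when σ₁ = 1. -/
/-! The map `t` is a Möbius transformation `k (σ + α) / (σ + β)` with real coefficients and
`k > 0`, so it sends the complement of the cut into the slit plane `ℂ \ (-∞, 0]`: if
`t = -u` with `u ≥ 0`, then `k (σ + α) + u (σ + β) = 0` exhibits `σ` as a convex combination
of `-α` and `-β`. The principal square root maps the slit plane into the open right half-plane,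
and the Cayley map `s ↦ (s - 1) / (s + 1)` maps that half-plane into the unit disc. -/

open Complex

lemma im_eq_zero_and_re_bounds_of_weighted_sum_eq_zero {a b p q : ℝ} (hab : a ≤ b) (hp : 0 < p)
    (hq : 0 ≤ q) {σ : ℂ} (h : (p : ℂ) * (σ + a) + (q : ℂ) * (σ + b) = 0) :
    σ.im = 0 ∧ -b ≤ σ.re ∧ σ.re ≤ -a := by
  have hre : p * (σ.re + a) + q * (σ.re + b) = 0 := by simpa using congrArg re h
  have him : (p + q) * σ.im = 0 := by
    have := congrArg im h
    simp only [mul_im, add_im, ofReal_re, ofReal_im, add_re, zero_mul, add_zero, zero_im] at this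
    linarith
  refine ⟨(mul_eq_zero.1 him).resolve_left (by positivity : 0 < p + q).ne', ?_, ?_⟩ <;>
    nlinarith [mul_le_mul_of_nonneg_left hab hp.le, mul_le_mul_of_nonneg_left hab hq]

lemma ofReal_mul_div_mem_slitPlane {a b k : ℝ} (hab : a ≤ b) (hk : 0 < k) {σ : ℂ}
    (hσ : ¬(σ.im = 0 ∧ -b ≤ σ.re ∧ σ.re ≤ -a)) : (k : ℂ) * ((σ + a) / (σ + b)) ∈ slitPlane := by
  rw [mem_slitPlane_iff_not_le_zero, nonpos_iff]
  set w := (k : ℂ) * ((σ + a) / (σ + b))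
  rintro ⟨hre, him⟩
  have hσb : σ + b ≠ 0 := by
    intro h
    rw [add_eq_zero_iff_eq_neg.1 h] at hσ
    simp [hab] at hσ
  have hw : w = (w.re : ℂ) := ext rfl (by simpa using him)
  refine hσ (im_eq_zero_and_re_bounds_of_weighted_sum_eq_zero hab hk (neg_nonneg.2 hre) ?_)
  have hw' : w * (σ + b) = k * (σ + a) := by
    simp only [w]; field_simp
  rw [hw] at hw'
  push_cast
  linear_combination -hw'

lemma re_cpow_inv_two_pos {w : ℂ} (hw : w ∈ slitPlane) : 0 < (w ^ (2⁻¹ : ℂ)).re := by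
  rw [cpow_inv_two_re, Real.sqrt_pos]
  rcases mem_slitPlane_iff.1 hw with hre | him
  · linarith [norm_nonneg w]
  · linarith [neg_abs_le w.re, abs_re_lt_norm.2 him]

lemma norm_sub_one_div_add_one_lt_one {s : ℂ} (hs : 0 < s.re) : ‖(s - 1) / (s + 1)‖ < 1 := by
  have hs1 : s + 1 ≠ 0 := ne_of_apply_ne re (by simp only [add_re, one_re, zero_re]; linarith)
  rw [norm_div, div_lt_one (norm_pos_iff.2 hs1), ← sq_lt_sq₀ (norm_nonneg _) (norm_nonneg _),
    Complex.sq_norm, Complex.sq_norm, normSq_apply, normSq_apply]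
  simp only [sub_re, add_re, one_re, sub_im, add_im, one_im, sub_zero, add_zero]
  nlinarith

/-- For reals `0 < α < β` and complex `σ₁` off the real segment `[-β, -α]`, with
`t = ((σ₁+α)(1+β))/((σ₁+β)(1+α))` and `z = (√t - 1)/(√t + 1)` (principal square
root), one has `|z| < 1`, and `z = 0` when `σ₁ = 1`. -/
theorem abs_z_lt_one_of_off_cut (α β : ℝ) (hα : 0 < α) (hαβ : α < β)
    (σ₁ : ℂ) (hσ : ¬(σ₁.im = 0 ∧ -β ≤ σ₁.re ∧ σ₁.re ≤ -α))
    (t z : ℂ)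
    (ht : t = ((σ₁ + (α : ℂ)) * (1 + (β : ℂ))) / ((σ₁ + (β : ℂ)) * (1 + (α : ℂ))))
    (hz : z = (t ^ ((1 : ℂ) / 2) - 1) / (t ^ ((1 : ℂ) / 2) + 1)) :
    ‖z‖ < 1 ∧ (σ₁ = 1 → z = 0) := by
  have hk : 0 < (1 + β) / (1 + α) := div_pos (by linarith) (by linarith)
  have ht' : t = (((1 + β) / (1 + α) : ℝ) : ℂ) * ((σ₁ + α) / (σ₁ + β)) := by
    rw [ht]; push_cast
    rw [div_mul_div_comm, mul_comm (1 + (β : ℂ)), mul_comm (1 + (α : ℂ))]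
  have hslit : t ∈ slitPlane := ht' ▸ ofReal_mul_div_mem_slitPlane hαβ.le hk hσ
  rw [one_div] at hz
  refine ⟨hz ▸ norm_sub_one_div_add_one_lt_one (re_cpow_inv_two_pos hslit), fun hσ₁ => ?_⟩
  have ht1 : t = 1 := by
    have h1α : (1 : ℂ) + α ≠ 0 := by exact_mod_cast (by linarith : (1 : ℝ) + α ≠ 0)
    have h1β : (1 : ℂ) + β ≠ 0 := by exact_mod_cast (by linarith : (1 : ℝ) + β ≠ 0)
    rw [ht, hσ₁, div_eq_one_iff_eq (mul_ne_zero h1β h1α), mul_comm]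
  simp [hz, ht1]
end

section
/- Let α, β be real with 0 < α < β. Then there exist complex numbers p₁, p₂, p₃ with p₁² + p₂² + p₃² = 1, p₂ ≠ 0, p₂² ≠ 1, such that α = -1 - p₁²/(p₂² - 1) and β = -1 - p₁²/p₂²; explicitly one may take p₁² = (1 + β)(1 + α)/(β - α) and p₂² = -(1 + α)/(β - α). Moreover any such p₂ satisfies that p₂² is a negative real number, so p₂ is not real. -/
/-!
Clearing denominators, the two cut equations read `p₁² = -(1 + α)(p₂² - 1)` and
`p₁² = -(1 + β) p₂²`; subtracting them gives the linear equation `(β - α) p₂² = -(1 + α)`,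
which determines `p₂²` (and then `p₁²`), and conversely these values solve both equations.
Since `0 < α < β`, the value `p₂² = -(1 + α)/(β - α)` is a negative real, so `p₂` cannot be
real; square roots of all the values exist in `ℂ`.
-/

section CutEquations

variable {K : Type*} [Field K] {α β P Q : K}

theorem sub_mul_eq_of_cut_eqs (hQ : Q ≠ 0) (hQ1 : Q ≠ 1)
    (hα : α = -1 - P / (Q - 1)) (hβ : β = -1 - P / Q) :
    (β - α) * Q = -(1 + α) := by
  have hQ1' : Q - 1 ≠ 0 := sub_ne_zero.mpr hQ1
  have eα : P = -(1 + α) * (Q - 1) := by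
    rw [hα]; field_simp; ring
  have eβ : P = -(1 + β) * Q := by
    rw [hβ]; field_simp; ring
  linear_combination eβ - eα

theorem eq_div_of_cut_eqs (hαβ : α ≠ β) (hQ : Q ≠ 0) (hQ1 : Q ≠ 1)
    (hα : α = -1 - P / (Q - 1)) (hβ : β = -1 - P / Q) :
    Q = -(1 + α) / (β - α) := by
  rw [eq_div_iff (sub_ne_zero.mpr hαβ.symm), mul_comm]
  exact sub_mul_eq_of_cut_eqs hQ hQ1 hα hβ

theorem cut_eqs_of_eq_div (hαβ : α ≠ β) (h1α : 1 + α ≠ 0) (h1β : 1 + β ≠ 0)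
    (hP : P = (1 + β) * (1 + α) / (β - α)) (hQ : Q = -(1 + α) / (β - α)) :
    Q ≠ 0 ∧ Q ≠ 1 ∧ α = -1 - P / (Q - 1) ∧ β = -1 - P / Q := by
  have hd : β - α ≠ 0 := sub_ne_zero.mpr hαβ.symm
  have hQ0 : Q ≠ 0 := hQ ▸ div_ne_zero (neg_ne_zero.mpr h1α) hd
  have hQ1 : Q - 1 ≠ 0 := by
    rw [show Q - 1 = -(1 + β) / (β - α) by rw [hQ]; field_simp; ring]
    exact div_ne_zero (neg_ne_zero.mpr h1β) hd
  refine ⟨hQ0, sub_ne_zero.mp hQ1, ?_, ?_⟩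
  · rw [show P = -(1 + α) * (Q - 1) by rw [hP, hQ]; field_simp; ring]
    field_simp; ring
  · rw [show P = -(1 + β) * Q by rw [hP, hQ]; field_simp]
    field_simp; ring

end CutEquations

theorem Complex.ne_ofReal_of_sq_eq_ofReal_neg {z : ℂ} {r : ℝ} (hr : r < 0)
    (hz : z ^ 2 = r) (s : ℝ) : z ≠ s := by
  rintro rfl
  have : s ^ 2 = r := by exact_mod_cast hz
  linarith [sq_nonneg s]

/-- For reals `0 < α < β` there exist complex `p₁, p₂, p₃` with
`p₁² + p₂² + p₃² = 1`, `p₂ ≠ 0`, `p₂² ≠ 1`, realizing `α = -1 - p₁²/(p₂² - 1)` and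
`β = -1 - p₁²/p₂²`, with the explicit choice `p₁² = (1+β)(1+α)/(β-α)` and
`p₂² = -(1+α)/(β-α)`. Moreover any such `p₂` has `p₂²` a negative real number,
hence `p₂` is not real. -/
theorem exists_complex_p_for_cut (α β : ℝ) (hα : 0 < α) (hαβ : α < β) :
    (∃ p₁ p₂ p₃ : ℂ,
      p₁ ^ 2 + p₂ ^ 2 + p₃ ^ 2 = 1 ∧ p₂ ≠ 0 ∧ p₂ ^ 2 ≠ 1 ∧
      (α : ℂ) = -1 - p₁ ^ 2 / (p₂ ^ 2 - 1) ∧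
      (β : ℂ) = -1 - p₁ ^ 2 / p₂ ^ 2 ∧
      p₁ ^ 2 = (1 + (β : ℂ)) * (1 + (α : ℂ)) / ((β : ℂ) - (α : ℂ)) ∧
      p₂ ^ 2 = -(1 + (α : ℂ)) / ((β : ℂ) - (α : ℂ))) ∧
    (∀ p₁ p₂ : ℂ, p₂ ≠ 0 → p₂ ^ 2 ≠ 1 →
      (α : ℂ) = -1 - p₁ ^ 2 / (p₂ ^ 2 - 1) →
      (β : ℂ) = -1 - p₁ ^ 2 / p₂ ^ 2 →
      (∃ r : ℝ, r < 0 ∧ p₂ ^ 2 = (r : ℂ)) ∧ ∀ r : ℝ, p₂ ≠ (r : ℂ)) := by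
  have hαβ' : (α : ℂ) ≠ β := Complex.ofReal_injective.ne hαβ.ne
  have h1α : (1 : ℂ) + α ≠ 0 := by exact_mod_cast (by positivity : (1 : ℝ) + α ≠ 0)
  have h1β : (1 : ℂ) + β ≠ 0 := by exact_mod_cast (by linarith : (1 : ℝ) + β ≠ 0)
  have hneg : -(1 + α) / (β - α) < 0 := div_neg_of_neg_of_pos (by linarith) (by linarith)
  refine ⟨?_, fun p₁ p₂ hp₂ hp₂1 hcutα hcutβ => ?_⟩
  · obtain ⟨p₁, hp₁⟩ := IsAlgClosed.exists_pow_nat_eq ((1 + (β : ℂ)) * (1 + α) / (β - α)) two_pos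
    obtain ⟨p₂, hp₂⟩ := IsAlgClosed.exists_pow_nat_eq (-(1 + (α : ℂ)) / (β - α)) two_pos
    obtain ⟨p₃, hp₃⟩ := IsAlgClosed.exists_pow_nat_eq (1 - p₁ ^ 2 - p₂ ^ 2) two_pos
    obtain ⟨hQ, hQ1, hcutα, hcutβ⟩ := cut_eqs_of_eq_div hαβ' h1α h1β hp₁ hp₂
    exact ⟨p₁, p₂, p₃, by rw [hp₃]; ring, (pow_ne_zero_iff two_ne_zero).mp hQ, hQ1,
      hcutα, hcutβ, hp₁, hp₂⟩
  · have hQ : p₂ ^ 2 = ((-(1 + α) / (β - α) : ℝ) : ℂ) := by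
      push_cast
      exact eq_div_of_cut_eqs hαβ' (pow_ne_zero 2 hp₂) hp₂1 hcutα hcutβ
    exact ⟨⟨_, hneg, hQ⟩, Complex.ne_ofReal_of_sq_eq_ofReal_neg hneg hQ⟩
end

section
/- The function σ₁ ↦ ((1 + 3σ₁)/(3 + σ₁))^(1/2), where the power is the principal complex power (principal branch of the argument in (-π, π]), is complex-differentiable (holomorphic) at every point of ℂ \ [-3, -1/3], where [-3, -1/3] denotes the real segment viewed as a subset of ℂ. -/
/-!
A real Möbius map `z ↦ (a + b z)/(c + d z)` multiplies the imaginary part by the factor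
`(b c - a d)/|c + d z|²`, so `(1 + 3σ)/(3 + σ)` is non-real off the real axis; on the real axis
it is positive exactly outside `[-3, -1/3]`. Hence the ratio stays in the slit plane, where the
principal square root is holomorphic.
-/

open Complex

theorem Complex.im_div_of_real_coeffs (a b c d : ℝ) (z : ℂ) :
    ((a + b * z) / (c + d * z)).im = (b * c - a * d) * z.im / normSq (c + d * z) := by
  simp only [div_im, add_im, ofReal_im, mul_im, ofReal_re, zero_mul, add_zero, zero_add, add_re,
    mul_re, sub_zero]
  ring

theorem Complex.div_mem_slitPlane_of_im_ne_zero {a b c d : ℝ} (hdet : b * c - a * d ≠ 0)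
    {z : ℂ} (hz : z.im ≠ 0) : (a + b * z) / (c + d * z) ∈ slitPlane := by
  have hden : (c : ℂ) + d * z ≠ 0 := by
    intro h0
    have him : d * z.im = 0 := by simpa using congrArg im h0
    have hd : d = 0 := (mul_eq_zero.mp him).resolve_right hz
    have hc : c = 0 := by simpa [hd] using congrArg re h0
    exact hdet (by simp [hc, hd])
  rw [mem_slitPlane_iff, im_div_of_real_coeffs]
  exact Or.inr (div_ne_zero (mul_ne_zero hdet hz) (normSq_pos.mpr hden).ne')

theorem obnosov_ratio_pos {x : ℝ} (hx : x < -3 ∨ -(1 / 3) < x) : 0 < (1 + 3 * x) / (3 + x) := by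
  rcases hx with hx | hx
  · exact div_pos_of_neg_of_neg (by linarith) (by linarith)
  · exact div_pos (by linarith) (by linarith)

theorem obnosov_ratio_mem_slitPlane {z : ℂ} (h : ¬(z.im = 0 ∧ -3 ≤ z.re ∧ z.re ≤ -(1 / 3))) :
    (1 + 3 * z) / (3 + z) ∈ slitPlane := by
  by_cases hz : z.im = 0
  · lift z to ℝ using hz
    have hx : z < -3 ∨ -(1 / 3) < z := by
      by_contra! hx
      exact h ⟨ofReal_im z, by simpa using hx.1, by simpa using hx.2⟩
    have hcast : (1 + 3 * (z : ℂ)) / (3 + z) = ((1 + 3 * z) / (3 + z) : ℝ) := by push_cast; rfl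
    exact hcast ▸ ofReal_mem_slitPlane.mpr (obnosov_ratio_pos hx)
  · simpa using div_mem_slitPlane_of_im_ne_zero (a := 1) (b := 3) (c := 3) (d := 1)
      (by norm_num) hz

/-- The Obnosov effective conductivity `σ₁ ↦ ((1 + 3σ₁)/(3 + σ₁))^(1/2)`
(principal complex power) is holomorphic at every point of
`ℂ \ [-3, -1/3]`, where `[-3, -1/3]` is the real segment viewed inside `ℂ`. -/
theorem obnosov_holomorphic_off_cut (σ₁ : ℂ)
    (h : ¬(σ₁.im = 0 ∧ -3 ≤ σ₁.re ∧ σ₁.re ≤ -(1 / 3))) :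
    DifferentiableAt ℂ (fun σ : ℂ => ((1 + 3 * σ) / (3 + σ)) ^ ((1 : ℂ) / 2)) σ₁ := by
  have hslit := obnosov_ratio_mem_slitPlane h
  -- a vanishing denominator would make the ratio the junk value `0`, which is off the slit plane
  have hden : 3 + σ₁ ≠ 0 := fun h0 => slitPlane_ne_zero hslit (by simp [h0])
  have hratio : DifferentiableAt ℂ (fun σ : ℂ => (1 + 3 * σ) / (3 + σ)) σ₁ := by
    fun_prop (disch := exact hden)
  exact hratio.cpow (differentiableAt_const _) hslit
end
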